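/- (Vanishing minor.) For every integer j with 1 ≤ j ≤ m−1 and every b = (b_1, …, b_N) ∈ ℂ^N, the minor of the matrix ū₂ on rows {j+1} ∪ {m+1, m+2, …, 2m+1} and columns {j, j+1, …, j+m+1} vanishes: Δ^{{j+1}∪{m+1,…,2m+1}}_{{j,j+1,…,j+m+1}}(ū₂) = 0. -/

import Mathlib

/-!
Formalization of a statement from "A Landau-Ginzburg model for Lagrangian
Grassmannians, Langlands duality, and relations in quantum cohomology"
(arXiv:1304.4958).

Conventions: `V = ℂ^(2m+1)` with 0-based coordinates (`a : Fin (2m+1)`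
corresponds to the paper's 1-based basis index `i = a+1`);
`ε(i) = (−1)^(m+1−i)`, written as `(−1)^(m+1+i)` which has the same parity.
-/

noncomputable section
open scoped BigOperators

/-- The matrix of the Chevalley generator `f_i` acting on `V = ℂ^(2m+1)`:
`f_i = E_{i+1,i} + E_{2m+2−i,2m+1−i}` (paper 1-based indices) for `1 ≤ i ≤ m−1`, and
`f_m = √2 (E_{m+1,m} + E_{m+2,m+1})`. -/
def fMat (m i : ℕ) : Matrix (Fin (2 * m + 1)) (Fin (2 * m + 1)) ℂ :=
  if i = m then
    Matrix.of fun a b =>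
      if ((a : ℕ) = m ∧ (b : ℕ) + 1 = m) ∨ ((a : ℕ) = m + 1 ∧ (b : ℕ) = m)
      then ((Real.sqrt 2 : ℝ) : ℂ) else 0
  else
    Matrix.of fun a b =>
      if ((a : ℕ) = i ∧ (b : ℕ) + 1 = i) ∨
          ((a : ℕ) + 1 = 2 * m + 2 - i ∧ (b : ℕ) + 1 = 2 * m + 1 - i)
      then 1 else 0

/-- Truncated exponential series for `(2m+1) × (2m+1)` matrices; it agrees with the
matrix exponential on every nilpotent matrix, since any nilpotent `A` here satisfies
`A ^ (2m+1) = 0` (and all the matrices `b • f_i` are nilpotent). -/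
def mexp (m : ℕ) (A : Matrix (Fin (2 * m + 1)) (Fin (2 * m + 1)) ℂ) :
    Matrix (Fin (2 * m + 1)) (Fin (2 * m + 1)) ℂ :=
  ∑ k ∈ Finset.range (2 * m + 2), ((k.factorial : ℂ))⁻¹ • A ^ k

-- squares
lemma fMat_sq_lt (m i : ℕ) (h1 : 1 ≤ i) (h2 : i < m) : fMat m i * fMat m i = 0 := by
  unfold fMat
  rw [if_neg (by omega)]
  ext a c
  rw [Matrix.mul_apply]
  apply Finset.sum_eq_zero
  intro b _
  simp only [Matrix.of_apply, Matrix.zero_apply]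
  split_ifs with hab hbc hbc <;> first | omega | simp

lemma fMat_sq_m (m : ℕ) (hm : 1 ≤ m) :
    fMat m m * fMat m m =
      Matrix.of fun (a c : Fin (2*m+1)) => if ((a : ℕ) = m + 1 ∧ (c : ℕ) + 1 = m) then 2 else 0 := by
  unfold fMat
  rw [if_pos rfl]
  ext a c
  rw [Matrix.mul_apply]
  simp only [Matrix.of_apply]
  by_cases hac : ((a : ℕ) = m + 1 ∧ (c : ℕ) + 1 = m)
  · rw [if_pos hac]
    rw [Finset.sum_eq_single (⟨m, by omega⟩ : Fin (2*m+1))]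
    · have hb0 : ((⟨m, by omega⟩ : Fin (2*m+1)) : ℕ) = m := rfl
      rw [if_pos (by rw [hb0]; omega), if_pos (by rw [hb0]; exact Or.inl ⟨rfl, hac.2⟩)]
      rw [← Complex.ofReal_mul, Real.mul_self_sqrt (by norm_num)]
      norm_num
    · intro b _ hb
      have hbv : (b : ℕ) ≠ m := fun h => hb (Fin.ext (by simpa using h))
      split_ifs with h1 h2 h2 <;> first | omega | simp
    · intro h; exact absurd (Finset.mem_univ _) h
  · rw [if_neg hac]
    apply Finset.sum_eq_zero
    intro b _
    split_ifs with h1 h2 h2 <;> first | omega | simp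

lemma fMat_cube (m i : ℕ) (h1 : 1 ≤ i) (h2 : i ≤ m) (hm : 1 ≤ m) :
    fMat m i * fMat m i * fMat m i = 0 := by
  rcases Nat.lt_or_ge i m with h | h
  · rw [fMat_sq_lt m i h1 h, Matrix.zero_mul]
  · rw [le_antisymm h2 h, fMat_sq_m m hm]
    unfold fMat
    rw [if_pos rfl]
    ext a c
    rw [Matrix.mul_apply]
    apply Finset.sum_eq_zero
    intro b _
    simp only [Matrix.of_apply, Matrix.zero_apply]
    split_ifs with hab hbc hbc <;> first | omega | simp

lemma mexp_closed (m : ℕ) (hm : 1 ≤ m) (A : Matrix (Fin (2 * m + 1)) (Fin (2 * m + 1)) ℂ)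
    (hA : A * A * A = 0) :
    mexp m A = 1 + A + (2:ℂ)⁻¹ • (A * A) := by
  have hA3 : A ^ 3 = 0 := by rw [pow_succ, pow_two, hA]
  unfold mexp
  rw [← Finset.sum_range_add_sum_Ico _ (by omega : 3 ≤ 2*m+2)]
  have h2 : ∑ k ∈ Finset.Ico 3 (2*m+2), ((k.factorial : ℂ))⁻¹ • A ^ k = 0 := by
    apply Finset.sum_eq_zero
    intro k hk
    rw [Finset.mem_Ico] at hk
    have : A ^ k = 0 := by
      rw [show k = 3 + (k - 3) by omega, pow_add, hA3, Matrix.zero_mul]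
    rw [this, smul_zero]
  rw [h2, add_zero]
  rw [Finset.sum_range_succ, Finset.sum_range_succ, Finset.sum_range_one]
  norm_num [pow_two]

lemma mexp_mul_inv (m i : ℕ) (h1 : 1 ≤ i) (h2 : i ≤ m) (hm : 1 ≤ m) (β : ℂ) :
    mexp m (β • fMat m i) * mexp m ((-β) • fMat m i) = 1 := by
  set f := fMat m i with hf
  have hcube : ∀ γ : ℂ, (γ • f) * (γ • f) * (γ • f) = 0 := by
    intro γ
    rw [smul_mul_smul_comm, smul_mul_smul_comm, fMat_cube m i h1 h2 hm, smul_zero]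
  rw [mexp_closed m hm _ (hcube β), mexp_closed m hm _ (hcube (-β))]
  set a := β • f with ha
  have hnn : (-β) • f = -a := by rw [ha, neg_smul]
  rw [hnn, neg_mul_neg]
  have h3 : a * a * a = 0 := hcube β
  have h3' : a * (a * a) = 0 := by rw [← mul_assoc, h3]
  have h4 : (a * a) * (a * a) = 0 := by rw [mul_assoc a a (a*a), h3', mul_zero]
  simp only [mul_add, add_mul, one_mul, mul_one, mul_neg, neg_mul, smul_mul_assoc,
    mul_smul_comm, h3, h3', h4, smul_zero, neg_zero, add_zero, zero_add, smul_smul]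
  module


/-- One-step reach bound for the factor `exp(β f_i)` (0-based indices). -/
def stepf (m i x : ℕ) : ℕ :=
  if i = m ∧ (x + 1 = m ∨ x = m) then m + 1
  else if x + 1 = i ∨ x + 1 = 2 * m + 1 - i then x + 1
  else x

lemma stepf_mono (m i : ℕ) : Monotone (stepf m i) := by
  intro x y hxy
  unfold stepf
  split_ifs <;> first | omega | exact (‹False›).elim

lemma stepf_ge (m i x : ℕ) : x ≤ stepf m i x := by
  unfold stepf; split_ifs <;> first | omega | exact (‹False›).elim

/-- `g a c = 0` whenever `a > f c`. -/
def SuppLe (m : ℕ) (g : Matrix (Fin (2*m+1)) (Fin (2*m+1)) ℂ) (f : ℕ → ℕ) : Prop :=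
  ∀ a c : Fin (2*m+1), f (c : ℕ) < (a : ℕ) → g a c = 0

lemma suppLe_mul (m : ℕ) (g r : Matrix (Fin (2*m+1)) (Fin (2*m+1)) ℂ) (s t : ℕ → ℕ)
    (hg : SuppLe m g s) (hr : SuppLe m r t) (hs : Monotone s) :
    SuppLe m (g * r) (fun c => s (t c)) := by
  intro a c h
  rw [Matrix.mul_apply]
  apply Finset.sum_eq_zero
  intro b _
  rcases Nat.lt_or_ge (t (c : ℕ)) (b : ℕ) with hb | hb
  · rw [hr b c hb, mul_zero]
  · rw [hg a b (lt_of_le_of_lt (hs hb) h), zero_mul]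

lemma suppLe_weaken (m : ℕ) (g : Matrix (Fin (2*m+1)) (Fin (2*m+1)) ℂ) (f f' : ℕ → ℕ)
    (h : SuppLe m g f) (hff : ∀ c, f c ≤ f' c) : SuppLe m g f' := by
  intro a c hc
  exact h a c (lt_of_le_of_lt (hff c) hc)

lemma suppLe_factor (m i : ℕ) (h1 : 1 ≤ i) (h2 : i ≤ m) (hm : 1 ≤ m) (β : ℂ) :
    SuppLe m (mexp m (β • fMat m i)) (stepf m i) := by
  have hcube : (β • fMat m i) * (β • fMat m i) * (β • fMat m i) = 0 := by
    rw [smul_mul_smul_comm, smul_mul_smul_comm, fMat_cube m i h1 h2 hm, smul_zero]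
  rw [mexp_closed m hm _ hcube]
  intro a c h
  have hsq : (β • fMat m i) * (β • fMat m i) = (β * β) • (fMat m i * fMat m i) := by
    rw [smul_mul_smul_comm]
  simp only [Matrix.add_apply, Matrix.smul_apply, hsq]
  have h1a : (1 : Matrix (Fin (2*m+1)) (Fin (2*m+1)) ℂ) a c = 0 := by
    apply Matrix.one_apply_ne
    intro hac
    subst hac
    exact absurd h (by simpa using stepf_ge m i (a : ℕ))
  have hstep : stepf m i (c : ℕ) < (a : ℕ) := h
  have hfa : fMat m i a c = 0 := by
    unfold fMat
    unfold stepf at hstep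
    by_cases him : i = m
    · rw [if_pos him, Matrix.of_apply, if_neg]
      split_ifs at hstep <;> omega
    · rw [if_neg him, Matrix.of_apply, if_neg]
      split_ifs at hstep <;> omega
  have hff : (fMat m i * fMat m i) a c = 0 := by
    rcases Nat.lt_or_ge i m with hlt | hge
    · rw [fMat_sq_lt m i h1 hlt]; rfl
    · have him : i = m := le_antisymm h2 hge
      rw [him, fMat_sq_m m hm, Matrix.of_apply, if_neg]
      unfold stepf at hstep
      split_ifs at hstep <;> omega
  rw [h1a, hfa, hff]
  simp

/-- Product of elementary factors given by a list of (coefficient, letter) pairs. -/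
def prodL (m : ℕ) (L : List (ℂ × ℕ)) : Matrix (Fin (2*m+1)) (Fin (2*m+1)) ℂ :=
  (L.map (fun p => mexp m (p.1 • fMat m p.2))).prod

lemma prodL_nil (m : ℕ) : prodL m [] = 1 := rfl

lemma prodL_cons (m : ℕ) (p : ℂ × ℕ) (L : List (ℂ × ℕ)) :
    prodL m (p :: L) = mexp m (p.1 • fMat m p.2) * prodL m L := by
  unfold prodL
  rw [List.map_cons, List.prod_cons]

lemma suppLe_prodL (m : ℕ) (hm : 1 ≤ m) (L : List (ℂ × ℕ))
    (hL : ∀ p ∈ L, 1 ≤ p.2 ∧ p.2 ≤ m) :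
    SuppLe m (prodL m L) (fun c => (L.map Prod.snd).foldr (stepf m) c) := by
  induction L with
  | nil =>
      rw [prodL_nil]
      intro a c h
      apply Matrix.one_apply_ne
      intro hac
      subst hac
      simp only [List.map_nil, List.foldr_nil] at h
      omega
  | cons p L ih =>
      rw [prodL_cons]
      have hp := hL p List.mem_cons_self
      have hrest := ih (fun q hq => hL q (List.mem_cons_of_mem p hq))
      have := suppLe_mul m _ _ (stepf m p.2) (fun c => (L.map Prod.snd).foldr (stepf m) c)
        (suppLe_factor m p.2 hp.1 hp.2 hm p.1) hrest (stepf_mono m p.2)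
      simpa using this

lemma prodL_mul_inv (m : ℕ) (hm : 1 ≤ m) (L : List (ℂ × ℕ))
    (hL : ∀ p ∈ L, 1 ≤ p.2 ∧ p.2 ≤ m) :
    prodL m L.reverse * prodL m (L.map (fun p => (-p.1, p.2))) = 1 := by
  induction L with
  | nil => rw [List.reverse_nil, List.map_nil, prodL_nil, one_mul]
  | cons p L ih =>
      have hp := hL p List.mem_cons_self
      have ih' := ih (fun q hq => hL q (List.mem_cons_of_mem p hq))
      rw [List.reverse_cons, List.map_cons, prodL_cons]
      have hrev : prodL m (L.reverse ++ [p]) = prodL m L.reverse * mexp m (p.1 • fMat m p.2) := by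
        unfold prodL
        rw [List.map_append, List.prod_append, List.map_cons, List.map_nil, List.prod_cons,
          List.prod_nil, mul_one]
      rw [hrev, mul_assoc, ← mul_assoc (mexp m (p.1 • fMat m p.2))]
      have hkey : mexp m (p.1 • fMat m p.2) *
          mexp m (((-p.1, p.2) : ℂ × ℕ).1 • fMat m ((-p.1, p.2) : ℂ × ℕ).2) = 1 :=
        mexp_mul_inv m p.2 hp.1 hp.2 hm p.1
      rw [hkey, one_mul, ih']


/-- `N = m(m+1)/2`. -/
def Nn (m : ℕ) : ℕ := m * (m + 1) / 2

/-- The word `(i_1, …, i_N)`: the concatenation of the blocks `(m−l, m−l+1, …, m)` for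
`l = 0, 1, …, m−1`, i.e. `(m; m−1, m; m−2, m−1, m; …; 1, 2, …, m)` (the `k`-th letter,
`1 ≤ k ≤ N`, is the list entry at position `k−1`). -/
def wordList (m : ℕ) : List ℕ :=
  (List.range m).flatMap (fun l => (List.range (l + 1)).map (fun t => m - l + t))

def blkf (m l : ℕ) : List ℕ := (List.range (l + 1)).map (fun t => m - l + t)

lemma wordList_eq (m : ℕ) : wordList m = (List.range m).flatMap (blkf m) := rfl

lemma blkf_succ (m l : ℕ) (h : l + 1 ≤ m) : blkf m (l+1) = (m - (l+1)) :: blkf m l := by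
  unfold blkf
  rw [List.range_succ_eq_map, List.map_cons, List.map_map]
  congr 1
  apply List.map_congr_left
  intro t _
  simp only [Function.comp_apply]
  omega

lemma mem_wordList (m i : ℕ) (h : i ∈ wordList m) : 1 ≤ i ∧ i ≤ m := by
  rw [wordList_eq] at h
  rw [List.mem_flatMap] at h
  obtain ⟨l, hl, hi⟩ := h
  rw [List.mem_range] at hl
  unfold blkf at hi
  rw [List.mem_map] at hi
  obtain ⟨t, ht, rfl⟩ := hi
  rw [List.mem_range] at ht
  omega

/-- Single-block forward reach bound. -/
def Sfun (m l x : ℕ) : ℕ :=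
  if x + l + 2 ≤ m then x else if x ≤ m then m + 1 else if x ≤ m + l then x + 1 else x

lemma Sfun_mono (m l : ℕ) : Monotone (Sfun m l) := by
  intro x y h; unfold Sfun; split_ifs <;> first | omega | exact (‹False›).elim

lemma foldl_blk (m l : ℕ) (hl : l < m) :
    ∀ x, List.foldl (fun y i => stepf m i y) x (blkf m l) ≤ Sfun m l x := by
  induction l with
  | zero =>
      intro x
      have hb0 : blkf m 0 = [m] := by
        unfold blkf
        norm_num [List.range_succ]
      rw [hb0]
      simp only [List.foldl_cons, List.foldl_nil]
      unfold stepf Sfun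
      split_ifs <;> first | omega | exact (‹False›).elim
  | succ l ih =>
      intro x
      rw [blkf_succ m l (by omega), List.foldl_cons]
      calc List.foldl (fun y i => stepf m i y) (stepf m (m - (l+1)) x) (blkf m l)
          ≤ Sfun m l (stepf m (m - (l+1)) x) := ih (by omega) _
        _ ≤ Sfun m (l+1) x := by
            unfold stepf Sfun
            split_ifs <;> first | omega | exact (‹False›).elim

/-- Forward outer bound: after the first `r` blocks. -/
def Vf (m r c : ℕ) : ℕ :=
  if r = 0 then c
  else if c + r + 1 ≤ m then c
  else if c + 1 ≤ m then c + r + 1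
  else if c ≤ m + r then m + r else c

lemma foldl_word (m : ℕ) (hm : 1 ≤ m) :
    ∀ r ≤ m, ∀ c, List.foldl (fun y i => stepf m i y) c ((List.range r).flatMap (blkf m)) ≤ Vf m r c := by
  intro r
  induction r with
  | zero => intro _ c; simp [Vf]
  | succ r ih =>
      intro hr c
      rw [List.range_succ, List.flatMap_append, List.foldl_append]
      have h1 : List.foldl (fun y i => stepf m i y) c ((List.range r).flatMap (blkf m)) ≤ Vf m r c :=
        ih (by omega) c
      have h2 : (([r] : List ℕ).flatMap (blkf m)) = blkf m r := by simp
      rw [h2]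
      calc List.foldl (fun y i => stepf m i y) _ (blkf m r)
          ≤ Sfun m r (List.foldl (fun y i => stepf m i y) c ((List.range r).flatMap (blkf m))) :=
            foldl_blk m r (by omega) _
        _ ≤ Sfun m r (Vf m r c) := Sfun_mono m r h1
        _ ≤ Vf m (r+1) c := by unfold Sfun Vf; split_ifs <;> first | omega | exact (‹False›).elim

/-- Single-block reversed reach bound (`j` letters `m, m-1, …, m-j+1`). -/
def Tfun (m j x : ℕ) : ℕ :=
  if j = 0 then x
  else if x + j + 1 ≤ m then x
  else if x + 2 ≤ m then x + 1
  else if x + 1 ≤ m + j then m + j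
  else x

lemma foldr_blk (m l : ℕ) (hl : l < m) :
    ∀ x, List.foldr (stepf m) x (blkf m l) ≤ Tfun m (l+1) x := by
  induction l with
  | zero =>
      intro x
      have hb0 : blkf m 0 = [m] := by
        unfold blkf
        norm_num [List.range_succ]
      rw [hb0]
      simp only [List.foldr_cons, List.foldr_nil]
      unfold stepf Tfun
      split_ifs <;> first | omega | exact (‹False›).elim
  | succ l ih =>
      intro x
      rw [blkf_succ m l (by omega), List.foldr_cons]
      calc stepf m (m - (l+1)) (List.foldr (stepf m) x (blkf m l))
          ≤ stepf m (m - (l+1)) (Tfun m (l+1) x) := stepf_mono m _ (ih (by omega) x)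
        _ ≤ Tfun m (l+2) x := by
            unfold stepf Tfun
            split_ifs <;> first | omega | exact (‹False›).elim

/-- Reversed outer bound: composition of the last `r` blocks. -/
def Cf (m r c : ℕ) : ℕ :=
  if r = 0 then c
  else if c + r + 1 ≤ m then c
  else if c + 2 ≤ m then c + r + 1
  else if c ≤ m + r then m + r else c

lemma Cf_mono (m r : ℕ) : Monotone (Cf m r) := by
  intro x y h; unfold Cf; split_ifs <;> first | omega | exact (‹False›).elim

lemma foldr_word (m : ℕ) (hm : 1 ≤ m) :
    ∀ r ≤ m, ∀ c, List.foldr (stepf m) c ((List.range r).flatMap (blkf m)) ≤ Cf m r c := by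
  intro r
  induction r with
  | zero => intro _ c; simp [Cf]
  | succ r ih =>
      intro hr c
      rw [List.range_succ, List.flatMap_append, List.foldr_append]
      have h2 : (([r] : List ℕ).flatMap (blkf m)) = blkf m r := by simp
      rw [h2]
      calc List.foldr (stepf m) (List.foldr (stepf m) c (blkf m r)) ((List.range r).flatMap (blkf m))
          ≤ Cf m r (List.foldr (stepf m) c (blkf m r)) := ih (by omega) _
        _ ≤ Cf m r (Tfun m (r+1) c) := Cf_mono m r (foldr_blk m r (by omega) c)
        _ ≤ Cf m (r+1) c := by unfold Cf Tfun; split_ifs <;> first | omega | exact (‹False›).elim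

lemma reach_forward (m : ℕ) (hm : 1 ≤ m) (c : ℕ) :
    List.foldr (stepf m) c ((wordList m).reverse) ≤ c + m + 1 := by
  rw [List.foldr_reverse]
  calc List.foldl (fun x y => stepf m y x) c (wordList m) ≤ Vf m m c := by
        rw [wordList_eq]; exact foldl_word m hm m le_rfl c
    _ ≤ c + m + 1 := by unfold Vf; split_ifs <;> first | omega | exact (‹False›).elim

lemma reach_backward (m : ℕ) (hm : 1 ≤ m) (c : ℕ) :
    List.foldr (stepf m) c (wordList m) ≤ c + m + 1 := by
  calc List.foldr (stepf m) c (wordList m) ≤ Cf m m c := by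
        rw [wordList_eq]; exact foldr_word m hm m le_rfl c
    _ ≤ c + m + 1 := by unfold Cf; split_ifs <;> first | omega | exact (‹False›).elim


/-- The lower-triangular unipotent matrix `ū₂ = exp(b_N f_{i_N}) ⋯ exp(b_1 f_{i_1})`
(the parameter `b_k` is `b k`). -/
def u2mat (m : ℕ) (b : ℕ → ℂ) : Matrix (Fin (2 * m + 1)) (Fin (2 * m + 1)) ℂ :=
  (((wordList m).zipIdx.map (fun p => mexp m (b (p.2 + 1) • fMat m p.1))).reverse).prod

/-- The list of (coefficient, letter) pairs defining `ū₂`. -/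
def pairList (m : ℕ) (b : ℕ → ℂ) : List (ℂ × ℕ) :=
  (wordList m).zipIdx.map (fun p => (b (p.2 + 1), p.1))

lemma pairList_letters (m : ℕ) (b : ℕ → ℂ) :
    (pairList m b).map Prod.snd = wordList m := by
  unfold pairList
  rw [List.map_map]
  exact List.zipIdx_map_fst 0 _

lemma pairList_mem (m : ℕ) (b : ℕ → ℂ) (p : ℂ × ℕ) (hp : p ∈ pairList m b) :
    1 ≤ p.2 ∧ p.2 ≤ m := by
  apply mem_wordList m
  rw [← pairList_letters m b]
  exact List.mem_map_of_mem (f := Prod.snd) hp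

lemma u2mat_eq_prodL (m : ℕ) (b : ℕ → ℂ) :
    u2mat m b = prodL m (pairList m b).reverse := by
  unfold u2mat prodL pairList
  rw [List.map_reverse, List.map_map]
  rfl

/-- Inverse of `ū₂`. -/
def u2inv (m : ℕ) (b : ℕ → ℂ) : Matrix (Fin (2 * m + 1)) (Fin (2 * m + 1)) ℂ :=
  prodL m ((pairList m b).map (fun p => (-p.1, p.2)))

lemma u2mat_mul_inv (m : ℕ) (hm : 1 ≤ m) (b : ℕ → ℂ) :
    u2mat m b * u2inv m b = 1 := by
  rw [u2mat_eq_prodL]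
  exact prodL_mul_inv m hm (pairList m b) (pairList_mem m b)

/-- Band property of `ū₂`: entries vanish below the (m+1)-st subdiagonal. -/
lemma u2mat_band (m : ℕ) (hm : 1 ≤ m) (b : ℕ → ℂ) (a c : Fin (2*m+1))
    (h : (c : ℕ) + m + 1 < (a : ℕ)) : u2mat m b a c = 0 := by
  rw [u2mat_eq_prodL]
  have hsupp := suppLe_prodL m hm (pairList m b).reverse
    (fun p hp => pairList_mem m b p (List.mem_reverse.mp hp))
  apply hsupp
  have : ((pairList m b).reverse.map Prod.snd) = (wordList m).reverse := by
    rw [List.map_reverse, pairList_letters]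
  rw [this]
  exact lt_of_le_of_lt (reach_forward m hm (c : ℕ)) h

lemma u2inv_band (m : ℕ) (hm : 1 ≤ m) (b : ℕ → ℂ) (a c : Fin (2*m+1))
    (h : (c : ℕ) + m + 1 < (a : ℕ)) : u2inv m b a c = 0 := by
  unfold u2inv
  have hmem : ∀ p ∈ (pairList m b).map (fun p => (-p.1, p.2)), 1 ≤ p.2 ∧ p.2 ≤ m := by
    intro p hp
    rw [List.mem_map] at hp
    obtain ⟨q, hq, rfl⟩ := hp
    exact pairList_mem m b q hq
  have hsupp := suppLe_prodL m hm _ hmem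
  apply hsupp
  have : (((pairList m b).map (fun p => (-p.1, p.2))).map Prod.snd) = wordList m := by
    rw [List.map_map]
    have : (Prod.snd ∘ fun p : ℂ × ℕ => (-p.1, p.2)) = Prod.snd := rfl
    rw [this, pairList_letters]
  rw [this]
  exact lt_of_le_of_lt (reach_backward m hm (c : ℕ)) h

lemma card_filter_val_lt (K t : ℕ) (h : t ≤ K) :
    (Finset.univ.filter (fun q : Fin K => (q : ℕ) < t)).card = t := by
  have : (Finset.univ.filter (fun q : Fin K => (q : ℕ) < t)) =
      (Finset.range t).attachFin (fun x hx => lt_of_lt_of_le (Finset.mem_range.mp hx) h) := by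
    ext a
    simp [Finset.mem_attachFin]
  rw [this, Finset.card_attachFin, Finset.card_range]

lemma perm_hit {K : ℕ} (σ : Equiv.Perm (Fin K)) (Q P : Finset (Fin K))
    (h : K < Q.card + P.card) : ∃ q ∈ Q, σ q ∈ P := by
  by_contra hcon
  push_neg at hcon
  have hsub : Q.image σ ⊆ Pᶜ := by
    intro x hx
    rw [Finset.mem_image] at hx
    obtain ⟨q, hq, rfl⟩ := hx
    exact Finset.mem_compl.mpr (hcon q hq)
  have h1 : (Q.image σ).card = Q.card := Finset.card_image_of_injective Q σ.injective
  have h2 : (Pᶜ).card = Fintype.card (Fin K) - P.card := Finset.card_compl P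
  have h3 := Finset.card_le_card hsub
  rw [h1, h2, Fintype.card_fin] at h3
  have hP : P.card ≤ K := by simpa using Finset.card_le_univ P
  omega

lemma jacobi_vanish {n : ℕ} (g h : Matrix (Fin n) (Fin n) ℂ) (hgh : g * h = 1)
    (A B : Finset (Fin n)) (hBA : B.card = A.card) (hc : Aᶜ.card = Bᶜ.card)
    (hzero : (Matrix.of fun p q : Fin Bᶜ.card =>
        h (Bᶜ.orderEmbOfFin rfl p) (Aᶜ.orderEmbOfFin hc q)).det = 0) :
    (Matrix.of fun p q : Fin A.card =>
        g (A.orderEmbOfFin rfl p) (B.orderEmbOfFin hBA q)).det = 0 := by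
  classical
  have hBcard : B.card ≤ n := by
    simpa [Fintype.card_fin] using Finset.card_le_univ B
  have hBc : Bᶜ.card = n - B.card := by
    rw [Finset.card_compl, Fintype.card_fin]
  have hcards : A.card + Bᶜ.card = n := by omega
  -- the two equivalences
  let fA : Fin A.card ⊕ Fin Bᶜ.card → Fin n :=
    Sum.elim (A.orderEmbOfFin rfl) (Aᶜ.orderEmbOfFin hc)
  let fB : Fin A.card ⊕ Fin Bᶜ.card → Fin n :=
    Sum.elim (B.orderEmbOfFin hBA) (Bᶜ.orderEmbOfFin rfl)
  have hinj : ∀ (s : Finset (Fin n)) (e1 : Fin A.card ↪o Fin n) (e2 : Fin Bᶜ.card ↪o Fin n),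
      (∀ p, e1 p ∈ s) → (∀ p, e2 p ∈ sᶜ) →
      Function.Injective (Sum.elim (fun p => e1 p) (fun p => e2 p)) := by
    intro s e1 e2 h1 h2 u v huv
    rcases u with p | p <;> rcases v with q | q <;>
      simp only [Sum.elim_inl, Sum.elim_inr] at huv
    · exact congrArg Sum.inl (e1.injective huv)
    · exfalso
      have hv := h2 q
      rw [← huv] at hv
      exact (Finset.mem_compl.mp hv) (h1 p)
    · exfalso
      have hv := h2 p
      rw [huv] at hv
      exact (Finset.mem_compl.mp hv) (h1 q)
    · exact congrArg Sum.inr (e2.injective huv)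
  have hfA_inj : Function.Injective fA :=
    hinj A (A.orderEmbOfFin rfl) (Aᶜ.orderEmbOfFin hc)
      (fun p => Finset.orderEmbOfFin_mem A rfl p)
      (fun p => Finset.orderEmbOfFin_mem Aᶜ hc p)
  have hfB_inj : Function.Injective fB :=
    hinj B (B.orderEmbOfFin hBA) (Bᶜ.orderEmbOfFin rfl)
      (fun p => Finset.orderEmbOfFin_mem B hBA p)
      (fun p => Finset.orderEmbOfFin_mem Bᶜ rfl p)
  have hcard : Fintype.card (Fin A.card ⊕ Fin Bᶜ.card) = Fintype.card (Fin n) := by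
    simp [Fintype.card_sum, Fintype.card_fin]
    omega
  have hfA_bij : Function.Bijective fA :=
    (Fintype.bijective_iff_injective_and_card fA).mpr ⟨hfA_inj, hcard⟩
  have hfB_bij : Function.Bijective fB :=
    (Fintype.bijective_iff_injective_and_card fB).mpr ⟨hfB_inj, hcard⟩
  let eA : (Fin A.card ⊕ Fin Bᶜ.card) ≃ Fin n := Equiv.ofBijective fA hfA_bij
  let eB : (Fin A.card ⊕ Fin Bᶜ.card) ≃ Fin n := Equiv.ofBijective fB hfB_bij
  set G : Matrix (Fin A.card ⊕ Fin Bᶜ.card) (Fin A.card ⊕ Fin Bᶜ.card) ℂ :=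
    g.submatrix eA eB with hG
  set H : Matrix (Fin A.card ⊕ Fin Bᶜ.card) (Fin A.card ⊕ Fin Bᶜ.card) ℂ :=
    h.submatrix eB eA with hH
  have hGH : G * H = 1 := by
    rw [hG, hH, Matrix.submatrix_mul_equiv, hgh, Matrix.submatrix_one_equiv]
  have hGdec := (Matrix.fromBlocks_toBlocks G).symm
  have hHdec := (Matrix.fromBlocks_toBlocks H).symm
  rw [hGdec, hHdec, Matrix.fromBlocks_multiply, ← Matrix.fromBlocks_one] at hGH
  have h12 := congrArg Matrix.toBlocks₁₂ hGH
  have h22 := congrArg Matrix.toBlocks₂₂ hGH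
  simp only [Matrix.toBlocks_fromBlocks₁₂, Matrix.toBlocks_fromBlocks₂₂] at h12 h22
  have key : G * (Matrix.fromBlocks 1 (H.toBlocks₁₂) 0 (H.toBlocks₂₂)) =
      Matrix.fromBlocks (G.toBlocks₁₁) 0 (G.toBlocks₂₁) 1 := by
    conv_lhs => rw [hGdec]
    rw [Matrix.fromBlocks_multiply]
    rw [h12, h22]
    simp
  have hdet := congrArg Matrix.det key
  simp only [Matrix.det_mul, Matrix.det_fromBlocks_zero₂₁, Matrix.det_fromBlocks_zero₁₂,
    Matrix.det_one, one_mul, mul_one] at hdet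
  have hH22 : H.toBlocks₂₂ = Matrix.of fun p q : Fin Bᶜ.card =>
      h (Bᶜ.orderEmbOfFin rfl p) (Aᶜ.orderEmbOfFin hc q) := rfl
  have hG11 : G.toBlocks₁₁ = Matrix.of fun p q : Fin A.card =>
      g (A.orderEmbOfFin rfl p) (B.orderEmbOfFin hBA q) := rfl
  rw [hH22, hzero, mul_zero, hG11] at hdet
  exact hdet.symm


/-- The subset of `Fin (2m+1)` corresponding to a set of paper (1-based) indices
in `{1,…,2m+1}`. -/
def finsetOfPaper (m : ℕ) (s : Finset ℕ) : Finset (Fin (2 * m + 1)) :=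
  Finset.univ.filter (fun a => (a : ℕ) + 1 ∈ s)

/-- The minor `Δ^A_B(g)` of a matrix `g` on the rows `A` and columns `B` (rows and
columns taken in increasing order; defined to be `0` if `A` and `B` have different
cardinalities, a case which never occurs below). -/
def minorM {n : ℕ} (g : Matrix (Fin n) (Fin n) ℂ) (A B : Finset (Fin n)) : ℂ :=
  if h : B.card = A.card then
    (Matrix.of fun p q : Fin A.card => g (A.orderEmbOfFin rfl p) (B.orderEmbOfFin h q)).det
  else 0

lemma card_finsetOfPaper (m : ℕ) (s : Finset ℕ) (hs : ∀ x ∈ s, 1 ≤ x ∧ x ≤ 2*m+1) :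
    (finsetOfPaper m s).card = s.card := by
  refine Finset.card_bij' (fun (a : Fin (2*m+1)) _ => (a : ℕ) + 1)
    (fun x hx => ⟨x - 1, by have := hs x hx; omega⟩) ?_ ?_ ?_ ?_
  · intro a ha
    exact (Finset.mem_filter.mp ha).2
  · intro x hx
    apply Finset.mem_filter.mpr
    refine ⟨Finset.mem_univ _, ?_⟩
    show (x - 1) + 1 ∈ s
    have := hs x hx
    rw [show x - 1 + 1 = x by omega]
    exact hx
  · intro a ha
    apply Fin.ext
    show (a : ℕ) + 1 - 1 = (a : ℕ)
    omega
  · intro x hx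
    show (x - 1) + 1 = x
    have := hs x hx
    omega

lemma cardA (m j : ℕ) (hm : 2 ≤ m) (hj : 1 ≤ j) (hjm : j ≤ m - 1) :
    (finsetOfPaper m (insert (j + 1) (Finset.Icc (m + 1) (2 * m + 1)))).card = m + 2 := by
  rw [card_finsetOfPaper]
  · rw [Finset.card_insert_of_notMem (by rw [Finset.mem_Icc]; omega), Nat.card_Icc]
    omega
  · intro x hx
    rcases Finset.mem_insert.mp hx with h | h
    · omega
    · rw [Finset.mem_Icc] at h; omega

lemma cardB (m j : ℕ) (hm : 2 ≤ m) (hj : 1 ≤ j) (hjm : j ≤ m - 1) :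
    (finsetOfPaper m (Finset.Icc j (j + m + 1))).card = m + 2 := by
  rw [card_finsetOfPaper]
  · rw [Nat.card_Icc]; omega
  · intro x hx
    rw [Finset.mem_Icc] at hx; omega

lemma detH22_zero (m j : ℕ) (hm : 2 ≤ m) (hj : 1 ≤ j) (hjm : j ≤ m - 1) (b : ℕ → ℂ)
    (hc : ((finsetOfPaper m (insert (j + 1) (Finset.Icc (m + 1) (2 * m + 1))))ᶜ).card =
      ((finsetOfPaper m (Finset.Icc j (j + m + 1)))ᶜ).card) :
    (Matrix.of fun p q : Fin ((finsetOfPaper m (Finset.Icc j (j + m + 1)))ᶜ).card =>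
        u2inv m b (((finsetOfPaper m (Finset.Icc j (j + m + 1)))ᶜ).orderEmbOfFin rfl p)
          (((finsetOfPaper m (insert (j + 1) (Finset.Icc (m + 1) (2 * m + 1))))ᶜ).orderEmbOfFin hc q)).det
      = 0 := by
  classical
  set A := finsetOfPaper m (insert (j + 1) (Finset.Icc (m + 1) (2 * m + 1))) with hA
  set B := finsetOfPaper m (Finset.Icc j (j + m + 1)) with hB
  have hcardBc : (Bᶜ).card = m - 1 := by
    have h1 : (Bᶜ).card = Fintype.card (Fin (2*m+1)) - B.card := Finset.card_compl B
    rw [Fintype.card_fin] at h1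
    have h2 : B.card = m + 2 := cardB m j hm hj hjm
    omega
  -- explicit description of the two order embeddings
  set fB : Fin (Bᶜ).card → Fin (2*m+1) := fun p =>
    (⟨if (p : ℕ) + 1 < j then (p : ℕ) else (p : ℕ) + m + 2, by
      have h1 := p.isLt; have h2 := hcardBc; split_ifs <;> omega⟩ : Fin (2*m+1)) with hfB
  set fA : Fin (Bᶜ).card → Fin (2*m+1) := fun q =>
    (⟨if (q : ℕ) < j then (q : ℕ) else (q : ℕ) + 1, by
      have h1 := q.isLt; have h2 := hcardBc; split_ifs <;> omega⟩ : Fin (2*m+1)) with hfA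
  have hBemb : fB = (Bᶜ.orderEmbOfFin rfl : Fin (Bᶜ).card → Fin (2*m+1)) := by
    apply Finset.orderEmbOfFin_unique
    · intro p
      have hp := p.isLt
      have hp2 := hcardBc
      rw [Finset.mem_compl, hB]
      unfold finsetOfPaper
      rw [Finset.mem_filter]
      rintro ⟨-, habs⟩
      rw [Finset.mem_Icc] at habs
      have hval : ((fB p : Fin (2*m+1)) : ℕ) =
          if (p : ℕ) + 1 < j then (p : ℕ) else (p : ℕ) + m + 2 := rfl
      rw [hval] at habs
      split_ifs at habs <;> omega
    · intro p q hpq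
      rw [Fin.lt_def] at hpq ⊢
      show (if (p : ℕ) + 1 < j then (p : ℕ) else (p : ℕ) + m + 2) <
        (if (q : ℕ) + 1 < j then (q : ℕ) else (q : ℕ) + m + 2)
      split_ifs <;> omega
  have hAemb : fA = (Aᶜ.orderEmbOfFin hc : Fin (Bᶜ).card → Fin (2*m+1)) := by
    apply Finset.orderEmbOfFin_unique
    · intro q
      have hq := q.isLt
      have hq2 := hcardBc
      rw [Finset.mem_compl, hA]
      unfold finsetOfPaper
      rw [Finset.mem_filter]
      rintro ⟨-, habs⟩
      rw [Finset.mem_insert, Finset.mem_Icc] at habs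
      have hval : ((fA q : Fin (2*m+1)) : ℕ) =
          if (q : ℕ) < j then (q : ℕ) else (q : ℕ) + 1 := rfl
      rw [hval] at habs
      split_ifs at habs <;> omega
    · intro p q hpq
      rw [Fin.lt_def] at hpq ⊢
      show (if (p : ℕ) < j then (p : ℕ) else (p : ℕ) + 1) <
        (if (q : ℕ) < j then (q : ℕ) else (q : ℕ) + 1)
      split_ifs <;> omega
  -- determinant vanishes via pigeonhole on permutations
  rw [Matrix.det_apply]
  apply Finset.sum_eq_zero
  intro σ _
  have hhit : ∃ q ∈ Finset.univ.filter (fun q : Fin (Bᶜ).card => (q : ℕ) < j),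
      σ q ∈ Finset.univ.filter (fun p : Fin (Bᶜ).card => j - 1 ≤ (p : ℕ)) := by
    apply perm_hit
    have hQ : (Finset.univ.filter (fun q : Fin (Bᶜ).card => (q : ℕ) < j)).card = j :=
      card_filter_val_lt _ j (by omega)
    have hQ' : (Finset.univ.filter (fun q : Fin (Bᶜ).card => (q : ℕ) < j - 1)).card = j - 1 :=
      card_filter_val_lt _ (j-1) (by omega)
    have hcompl : (Finset.univ.filter (fun p : Fin (Bᶜ).card => j - 1 ≤ (p : ℕ))) =
        (Finset.univ.filter (fun p : Fin (Bᶜ).card => (p : ℕ) < j - 1))ᶜ := by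
      ext p
      simp only [Finset.mem_filter, Finset.mem_compl, Finset.mem_univ, true_and]
      omega
    have hP : (Finset.univ.filter (fun p : Fin (Bᶜ).card => j - 1 ≤ (p : ℕ))).card =
        (Bᶜ).card - (j - 1) := by
      rw [hcompl, Finset.card_compl, Fintype.card_fin, hQ']
    rw [hQ, hP, hcardBc]
    omega
  obtain ⟨q, hq, hP⟩ := hhit
  rw [Finset.mem_filter] at hq hP
  have hzero : u2inv m b (Bᶜ.orderEmbOfFin rfl (σ q)) (Aᶜ.orderEmbOfFin hc q) = 0 := by
    apply u2inv_band m (by omega) b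
    have hr : ((Bᶜ.orderEmbOfFin rfl (σ q) : Fin (2*m+1)) : ℕ) =
        if ((σ q : Fin (Bᶜ).card) : ℕ) + 1 < j then ((σ q : Fin (Bᶜ).card) : ℕ)
        else ((σ q : Fin (Bᶜ).card) : ℕ) + m + 2 := by rw [← hBemb]
    have hcq : ((Aᶜ.orderEmbOfFin hc q : Fin (2*m+1)) : ℕ) =
        if (q : ℕ) < j then (q : ℕ) else (q : ℕ) + 1 := by rw [← hAemb]
    rw [hr, hcq]
    have h1 := hq.2
    have h2 := hP.2
    split_ifs <;> omega
  have : (∏ i, (Matrix.of fun p q : Fin ((Bᶜ : Finset (Fin (2*m+1)))).card =>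
      u2inv m b (Bᶜ.orderEmbOfFin rfl p) (Aᶜ.orderEmbOfFin hc q)) (σ i) i) = 0 :=
    Finset.prod_eq_zero (Finset.mem_univ q) hzero
  rw [this, smul_zero]

/-- vanishing minor. For every `1 ≤ j ≤ m−1` and all parameters `b`,
the minor of `ū₂` on rows `{j+1} ∪ {m+1,…,2m+1}` and columns `{j,…,j+m+1}` vanishes. -/
theorem vanishing_minor (m j : ℕ) (hm : 2 ≤ m) (hj : 1 ≤ j) (hjm : j ≤ m - 1)
    (b : ℕ → ℂ) :
    minorM (u2mat m b) (finsetOfPaper m (insert (j + 1) (Finset.Icc (m + 1) (2 * m + 1))))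
        (finsetOfPaper m (Finset.Icc j (j + m + 1))) = 0 := by
  classical
  set A := finsetOfPaper m (insert (j + 1) (Finset.Icc (m + 1) (2 * m + 1))) with hA
  set B := finsetOfPaper m (Finset.Icc j (j + m + 1)) with hB
  have hcA : A.card = m + 2 := cardA m j hm hj hjm
  have hcB : B.card = m + 2 := cardB m j hm hj hjm
  have hBA : B.card = A.card := by rw [hcA, hcB]
  have hc : Aᶜ.card = Bᶜ.card := by
    rw [Finset.card_compl, Finset.card_compl, hcA, hcB]
  unfold minorM
  rw [dif_pos hBA]
  exact jacobi_vanish (u2mat m b) (u2inv m b) (u2mat_mul_inv m (by omega) b) A B hBA hc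
    (detH22_zero m j hm hj hjm b hc)

end
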